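/- arXiv:1504.02923 — 2 statements merged into one kernel-verified Lean document; each statement's English description precedes it below -/
import Mathlib

section
/- Let A ∈ ℝ^{m×n} with m < n satisfy the URP, let G satisfy conditions (I)–(II), let b ∈ ℝᵐ, and let x be a solution of Aw = b of minimal ‖·‖₀, with k := ‖x‖₀ satisfying 2k ≤ m; set T = supp(x). Suppose the G Restricted Nullspace Property holds: for every w with Aw = b and ‖w‖₀ ≤ m, the vector h = x − w satisfies h = 0 or G(h_T) < G(h_{T^c}). Then every global minimizer of G over {w : Aw = b} equals x. -/
open MeasureTheory Filter
open scoped BigOperators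

noncomputable section

/-- `l0 w` is the number of nonzero entries of `w`. -/
def l0 {n : ℕ} (w : Fin n → ℝ) : ℕ := (Finset.univ.filter fun i => w i ≠ 0).card

/-- Euclidean (`ℓ²`) norm of a vector. -/
def l2 {k : ℕ} (v : Fin k → ℝ) : ℝ := Real.sqrt (∑ i, v i ^ 2)

/-- Restriction `h_T` of a vector to a finset `T` (zero outside `T`). -/
def restr {n : ℕ} (T : Finset (Fin n)) (h : Fin n → ℝ) : Fin n → ℝ :=
  fun i => if i ∈ T then h i else 0

/-- Unique Representation Property: every `m` columns of `A` are linearly independent. -/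
def URP {m n : ℕ} (A : Matrix (Fin m) (Fin n) ℝ) : Prop :=
  ∀ S : Finset (Fin n), S.card = m →
    LinearIndependent ℝ (fun j : S => (fun i : Fin m => A i (j : Fin n)))

/-- Conditions (I)-(II) on the penalty component `g`. -/
def PenaltyConds (g : ℝ → ℝ) : Prop :=
  g 0 = 0 ∧ (∀ w, g (-w) = g w) ∧ Continuous g ∧
    ((StrictMonoOn g (Set.Ioi 0) ∧ StrictConcaveOn ℝ (Set.Ioi 0) g) ∨
      (∃ γ : ℝ, 0 < γ ∧ StrictMonoOn g (Set.Ioc 0 γ) ∧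
        StrictConcaveOn ℝ (Set.Ioc 0 γ) g ∧ ∀ w, γ ≤ w → g w = g γ))

/-- Spectral (`ℓ² → ℓ²` operator) norm of a matrix. -/
def specNorm {m n : ℕ} (A : Matrix (Fin m) (Fin n) ℝ) : ℝ :=
  sSup {c | ∃ v : Fin n → ℝ, l2 v ≤ 1 ∧ c = l2 (A.mulVec v)}

/-- The `p`-shrinkage function `s_{λ,p}`. -/
def pshrinkFun (lam p t : ℝ) : ℝ :=
  if t ≤ 0 then 0 else max (t - lam ^ (2 - p) * t ^ (p - 1)) 0

/-- `f_p(x) = ∫₀ˣ s_{λ,p}(t) dt`. -/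
def pf (lam p x : ℝ) : ℝ := ∫ t in (0 : ℝ)..x, pshrinkFun lam p t

/-- Legendre–Fenchel transform `f_p*(w) = sup_{x ≥ 0} (x·w − f_p(x))`. -/
def pfstar (lam p w : ℝ) : ℝ := sSup ((fun x => x * w - pf lam p x) '' Set.Ici 0)

/-- The induced `p`-shrinkage penalty component `g_p`. -/
def gp (lam p w : ℝ) : ℝ := (pfstar lam p |w| - w ^ 2 / 2) / lam

/-- The induced `p`-shrinkage penalty `G_p`. -/
def Gp (lam p : ℝ) {n : ℕ} (w : Fin n → ℝ) : ℝ := ∑ i, gp lam p (w i)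

/-- The `p`-shrinkage mapping `S_p`. -/
def Sp (lam p : ℝ) {n : ℕ} (x : Fin n → ℝ) : Fin n → ℝ :=
  fun i => pshrinkFun lam p |x i| * Real.sign (x i)

/-- The objective `F_p(x) = λ G_p(x) + ½‖Ax − b‖₂²`. -/
def Fp (lam p : ℝ) {m n : ℕ} (A : Matrix (Fin m) (Fin n) ℝ) (b : Fin m → ℝ)
    (x : Fin n → ℝ) : ℝ :=
  lam * Gp lam p x + (1 / 2) * (l2 (A.mulVec x - b)) ^ 2

/-- Firm-thresholding penalty component. -/
def gfirm (μ w : ℝ) : ℝ := if |w| ≤ μ then |w| - w ^ 2 / (2 * μ) else μ / 2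

/-- Firm-thresholding penalty. -/
def Gfirm (μ : ℝ) {n : ℕ} (w : Fin n → ℝ) : ℝ := ∑ i, gfirm μ (w i)

/-- The `m × m` submatrix `A_S` of the columns of `A` indexed by `S`. -/
def colsub {m n : ℕ} (A : Matrix (Fin m) (Fin n) ℝ)
    (S : {S : Finset (Fin n) // S.card = m}) : Matrix (Fin m) (Fin m) ℝ :=
  Matrix.of fun i j => A i ((S.1.orderIsoOfFin S.2 j : Fin n))

/-- `α_S = ‖A_S⁻¹ b‖_{-∞}`. -/
def alphaS {m n : ℕ} (A : Matrix (Fin m) (Fin n) ℝ) (b : Fin m → ℝ)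
    (S : {S : Finset (Fin n) // S.card = m}) : ℝ :=
  ⨅ i, |((colsub A S)⁻¹).mulVec b i|

/-- `β_S = ‖A_S⁻¹ b‖_∞`. -/
def betaS {m n : ℕ} (A : Matrix (Fin m) (Fin n) ℝ) (b : Fin m → ℝ)
    (S : {S : Finset (Fin n) // S.card = m}) : ℝ :=
  ⨆ i, |((colsub A S)⁻¹).mulVec b i|

/-- `‖A_S⁻¹‖` (spectral norm). -/
def nrmInv {m n : ℕ} (A : Matrix (Fin m) (Fin n) ℝ)
    (S : {S : Finset (Fin n) // S.card = m}) : ℝ :=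
  specNorm ((colsub A S)⁻¹)

/-!
A global minimizer `x⋆` of `G` on `{w | A w = b}` has at most `m` nonzero entries. Otherwise some
`d ≠ 0` in the kernel of `A` is supported in the support of `x⋆`; rescaled so that `|dᵢ| ≤ |x⋆ᵢ|`
for all `i` with equality and opposite signs at some `j`, no coordinate of `x⋆ + t d` changes sign
for `t ∈ [-1, 1]`. There `t ↦ G(x⋆ + t d)` is concave with its minimum at the interior point `0`,
hence constant, yet it is strictly concave near `t = 1`, where the `j`-th coordinate tends to `0`
and `g` is strictly concave.

The restricted nullspace property therefore applies to `h = x - x⋆`. Since `g` is subadditive and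
`x` vanishes off `T`, unless `h = 0` we get
`G(x) ≤ G(x⋆_T) + G(h_T) < G(x⋆_T) + G(h_{Tᶜ}) = G(x⋆_T) + G(x⋆_{Tᶜ}) = G(x⋆)`,
contradicting the minimality of `x⋆`.
-/

open Set
open scoped Matrix

section Concavity

variable {𝕜 E β ι : Type*} [Semiring 𝕜] [PartialOrder 𝕜] [AddCommMonoid E] [SMul 𝕜 E]
  [AddCommMonoid β] [PartialOrder β] [IsOrderedAddMonoid β] [Module 𝕜 β]

theorem ConcaveOn.sum {s : Set E} (hs : Convex 𝕜 s) (t : Finset ι) {f : ι → E → β}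
    (hf : ∀ i ∈ t, ConcaveOn 𝕜 s (f i)) : ConcaveOn 𝕜 s fun x => ∑ i ∈ t, f i x := by
  classical
  induction t using Finset.induction_on with
  | empty => simpa using concaveOn_const (0 : β) hs
  | insert i t hi ih =>
    simp only [Finset.sum_insert hi]
    exact (hf i (Finset.mem_insert_self i t)).add
      (ih fun j hj => hf j (Finset.mem_insert_of_mem hj))

end Concavity

section RealConcavity

variable {g : ℝ → ℝ}

theorem ConcaveOn.comp_add_mul {S s : Set ℝ} (hg : ConcaveOn ℝ S g) (hs : Convex ℝ s)
    {a c : ℝ} (h : MapsTo (fun t => a + t * c) s S) :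
    ConcaveOn ℝ s fun t => g (a + t * c) := by
  refine ⟨hs, fun x hx y hy p q hp hq hpq => ?_⟩
  have key := hg.2 (h hx) (h hy) hp hq hpq
  simp only [smul_eq_mul] at key ⊢
  convert key using 2
  linear_combination (-a) * hpq

theorem StrictConcaveOn.comp_add_mul {S s : Set ℝ} (hg : StrictConcaveOn ℝ S g)
    (hs : Convex ℝ s) {a c : ℝ} (hc : c ≠ 0) (h : MapsTo (fun t => a + t * c) s S) :
    StrictConcaveOn ℝ s fun t => g (a + t * c) := by
  refine ⟨hs, fun x hx y hy hxy p q hp hq hpq => ?_⟩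
  have hne : a + x * c ≠ a + y * c := by simpa [hc] using hxy
  have key := hg.2 (h hx) (h hy) hne hp hq hpq
  simp only [smul_eq_mul] at key ⊢
  convert key using 2
  linear_combination (-a) * hpq

theorem ConcaveOn.eqOn_of_isMinOn_zero {r : ℝ} (hg : ConcaveOn ℝ (Icc (-r) r) g)
    (hmin : IsMinOn g (Icc (-r) r) 0) : EqOn g (fun _ => g 0) (Icc (-r) r) := by
  intro t ht
  have ht' : -t ∈ Icc (-r) r := ⟨neg_le_neg ht.2, neg_le.1 ht.1⟩
  have hmid := hg.2 ht ht' (by norm_num : (0 : ℝ) ≤ 1 / 2) (by norm_num : (0 : ℝ) ≤ 1 / 2)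
    (by norm_num)
  simp only [smul_eq_mul] at hmid
  rw [show 1 / 2 * t + 1 / 2 * -t = (0 : ℝ) by ring] at hmid
  have h₁ := isMinOn_iff.1 hmin t ht
  have h₂ := isMinOn_iff.1 hmin (-t) ht'
  show g t = g 0
  linarith

theorem ConcaveOn.Ici_of_Ioi {a : ℝ} (hg : ConcaveOn ℝ (Ioi a) g) (hcont : Continuous g) :
    ConcaveOn ℝ (Ici a) g := by
  refine ⟨convex_Ici a, fun x hx y hy p q hp hq hpq => ?_⟩
  have hclosed : IsClosed {z : ℝ × ℝ | p • g z.1 + q • g z.2 ≤ g (p • z.1 + q • z.2)} :=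
    isClosed_le (by fun_prop) (by fun_prop)
  have hsub := closure_minimal (fun z (hz : z ∈ Ioi a ×ˢ Ioi a) => hg.2 hz.1 hz.2 hp hq hpq) hclosed
  rw [closure_prod_eq, closure_Ioi] at hsub
  exact hsub (show (x, y) ∈ Ici a ×ˢ Ici a from ⟨hx, hy⟩)

theorem ConcaveOn.monotoneOn_Ici {a : ℝ} (hg : ConcaveOn ℝ (Ici a) g)
    (hm : MonotoneOn g (Ioi a)) : MonotoneOn g (Ici a) := by
  intro x hx y hy hxy
  rcases (mem_Ici.1 hx).eq_or_lt with rfl | hax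
  · rcases hxy.eq_or_lt with rfl | hxy
    · rfl
    -- the midpoint lies above the chord and below `g y`
    have hmid := hg.2 hx hy (by norm_num : (0 : ℝ) ≤ 1 / 2) (by norm_num : (0 : ℝ) ≤ 1 / 2)
      (by norm_num)
    have hle := hm (show a < 1 / 2 * a + 1 / 2 * y by linarith) (mem_Ioi.2 hxy) (by linarith)
    simp only [smul_eq_mul] at hmid
    linarith
  · exact hm hax (hax.trans_le hxy) hxy

theorem ConcaveOn.map_add_le (hg : ConcaveOn ℝ (Ici 0) g) (h0 : 0 ≤ g 0) {x y : ℝ}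
    (hx : 0 ≤ x) (hy : 0 ≤ y) : g (x + y) ≤ g x + g y := by
  rcases (add_nonneg hx hy).eq_or_lt with hs | hs
  · obtain ⟨rfl, rfl⟩ : x = 0 ∧ y = 0 := ⟨by linarith, by linarith⟩
    simpa using h0
  -- both `x` and `y` are convex combinations of `x + y` and `0`
  have hcomb : ∀ u v : ℝ, 0 ≤ u → 0 ≤ v → u + v = x + y →
      u / (x + y) * g (x + y) + v / (x + y) * g 0 ≤ g u := by
    intro u v hu hv huv
    have := hg.2 (mem_Ici.2 hs.le) (le_refl (0 : ℝ))
      (div_nonneg hu hs.le) (div_nonneg hv hs.le) (by rw [← add_div, huv, div_self hs.ne'])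
    simp only [smul_eq_mul, mul_zero, add_zero, div_mul_cancel₀ u hs.ne'] at this
    exact this
  have hx' := hcomb x y hx hy rfl
  have hy' := hcomb y x hy hx (add_comm y x)
  have hsum : x / (x + y) + y / (x + y) = 1 := by rw [← add_div, div_self hs.ne']
  linear_combination hx' + hy' + h0 - (g (x + y) + g 0) * hsum

end RealConcavity

section Sparsity

variable {m n : ℕ}

theorem exists_mulVec_eq_zero_of_lt_l0 (A : Matrix (Fin m) (Fin n) ℝ) {u : Fin n → ℝ}
    (h : m < l0 u) : ∃ v ≠ 0, A *ᵥ v = 0 ∧ ∀ i, u i = 0 → v i = 0 := by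
  -- `v ↦ (A v, v restricted to the zeros of u)` maps to a space of dimension `m + (n - l0 u) < n`
  let f := A.mulVecLin.prod (LinearMap.funLeft ℝ ℝ (Subtype.val : {i // u i = 0} → Fin n))
  have hrank : Module.finrank ℝ ((Fin m → ℝ) × ({i // u i = 0} → ℝ)) <
      Module.finrank ℝ (Fin n → ℝ) := by
    have hcard := Finset.card_filter_add_card_filter_not (s := Finset.univ)
      (fun i : Fin n => u i ≠ 0)
    simp only [Finset.card_univ, Fintype.card_fin, not_not] at hcard
    rw [Module.finrank_prod, Module.finrank_fin_fun, Module.finrank_fin_fun,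
      Module.finrank_fintype_fun_eq_card, Fintype.card_subtype]
    unfold l0 at h
    omega
  obtain ⟨v, hv, hv0⟩ := (Submodule.ne_bot_iff _).1 (LinearMap.ker_ne_bot_of_finrank_lt hrank)
  have hfv : f v = 0 := hv
  exact ⟨v, hv0, congrArg Prod.fst hfv, fun i hi => congrFun (congrArg Prod.snd hfv) ⟨i, hi⟩⟩

theorem exists_mulVec_eq_zero_abs_le (A : Matrix (Fin m) (Fin n) ℝ) {u : Fin n → ℝ}
    (h : m < l0 u) :
    ∃ d j, A *ᵥ d = 0 ∧ (∀ i, |d i| ≤ |u i|) ∧ d j = -u j ∧ u j ≠ 0 := by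
  obtain ⟨v, hv0, hAv, hvu⟩ := exists_mulVec_eq_zero_of_lt_l0 A h
  have hne : (Finset.univ.filter fun i => v i ≠ 0).Nonempty := by
    obtain ⟨i, hi⟩ := Function.ne_iff.1 hv0
    exact ⟨i, by simpa using hi⟩
  -- rescale `v` by the least ratio `|u i| / |v i|`
  obtain ⟨j, hj, hmin⟩ := Finset.exists_min_image _ (fun i => |u i| / |v i|) hne
  have hvj : v j ≠ 0 := (Finset.mem_filter.1 hj).2
  have huj : u j ≠ 0 := fun h => hvj (hvu j h)
  refine ⟨(-(u j / v j)) • v, j, by rw [Matrix.mulVec_smul, hAv, smul_zero], fun i => ?_,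
    by simp [hvj], huj⟩
  by_cases hvi : v i = 0
  · simp [hvi]
  have := hmin i (by simpa using hvi)
  rw [le_div_iff₀ (abs_pos.2 hvi)] at this
  simpa [abs_mul, abs_div] using this

end Sparsity

section PenaltyConds

variable {g : ℝ → ℝ} {ι : Type*} [Fintype ι] [DecidableEq ι]

theorem PenaltyConds.apply_abs (hg : PenaltyConds g) (x : ℝ) : g |x| = g x := by
  rcases abs_choice x with h | h <;> simp [h, hg.2.1]

theorem PenaltyConds.concaveOn_Ioi_and_monotoneOn_Ioi (hg : PenaltyConds g) :
    ConcaveOn ℝ (Ioi 0) g ∧ MonotoneOn g (Ioi 0) := by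
  obtain ⟨-, -, -, ⟨hm, hc⟩ | ⟨γ, hγ, hm, hc, hconst⟩⟩ := hg
  · exact ⟨hc.concaveOn, hm.monotoneOn⟩
  -- on `(0, ∞)`, `g` is its restriction to `(0, γ]` composed with the concave map `min · γ`
  have hcomp : g ∘ (fun w => min w γ) = g := funext fun w => by
    rcases le_total w γ with h | h
    · simp [min_eq_left h]
    · simp [min_eq_right h, hconst w h]
  have himage : (fun w => min w γ) '' Ioi 0 = Ioc 0 γ := by
    ext w
    constructor
    · rintro ⟨v, hv, rfl⟩
      exact ⟨lt_min hv hγ, min_le_right v γ⟩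
    · exact fun hw => ⟨w, hw.1, min_eq_left hw.2⟩
  have hmin : ConcaveOn ℝ (Ioi 0) fun w => min w γ :=
    (concaveOn_id (convex_Ioi 0)).inf (concaveOn_const γ (convex_Ioi 0))
  rw [← himage] at hm hc
  exact hcomp ▸ ⟨hc.concaveOn.comp hmin hm.monotoneOn,
    hm.monotoneOn.comp (fun v _ w _ hvw => min_le_min_right γ hvw) (mapsTo_image _ _)⟩

theorem PenaltyConds.concaveOn_Ici (hg : PenaltyConds g) : ConcaveOn ℝ (Ici 0) g :=
  hg.concaveOn_Ioi_and_monotoneOn_Ioi.1.Ici_of_Ioi hg.2.2.1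

theorem PenaltyConds.monotoneOn_Ici (hg : PenaltyConds g) : MonotoneOn g (Ici 0) :=
  hg.concaveOn_Ici.monotoneOn_Ici hg.concaveOn_Ioi_and_monotoneOn_Ioi.2

theorem PenaltyConds.exists_strictConcaveOn (hg : PenaltyConds g) :
    ∃ δ > 0, StrictConcaveOn ℝ (Ioc 0 δ) g := by
  obtain ⟨-, -, -, ⟨-, hc⟩ | ⟨γ, hγ, -, hc, -⟩⟩ := hg
  · exact ⟨1, one_pos, hc.subset Ioc_subset_Ioi_self (convex_Ioc 0 1)⟩
  · exact ⟨γ, hγ, hc⟩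

theorem PenaltyConds.map_add_le (hg : PenaltyConds g) (a c : ℝ) : g (a + c) ≤ g a + g c :=
  calc g (a + c) = g |a + c| := (hg.apply_abs _).symm
    _ ≤ g (|a| + |c|) :=
      hg.monotoneOn_Ici (abs_nonneg (a + c)) (add_nonneg (abs_nonneg a) (abs_nonneg c))
        (abs_add_le a c)
    _ ≤ g |a| + g |c| := hg.concaveOn_Ici.map_add_le hg.1.ge (abs_nonneg a) (abs_nonneg c)
    _ = g a + g c := by rw [hg.apply_abs, hg.apply_abs]

theorem PenaltyConds.concaveOn_line (hg : PenaltyConds g) {a c : ℝ} (h : |c| ≤ |a|) :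
    ConcaveOn ℝ (Icc (-1) 1) fun t => g (a + t * c) := by
  wlog ha : 0 ≤ a generalizing a c
  · have := this (a := -a) (c := -c) (by simpa using h) (by linarith)
    refine this.congr fun t _ => ?_
    rw [← hg.2.1 (a + t * c)]
    ring_nf
  refine hg.concaveOn_Ici.comp_add_mul (convex_Icc _ _) fun t ht => ?_
  have htc : |t * c| ≤ a := by
    rw [abs_mul, ← abs_of_nonneg ha]
    exact (mul_le_of_le_one_left (abs_nonneg c) (abs_le.2 ht)).trans h
  show 0 ≤ a + t * c
  linarith [neg_abs_le (t * c)]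

theorem PenaltyConds.strictConcaveOn_line (hg : PenaltyConds g) {δ : ℝ}
    (hδ : StrictConcaveOn ℝ (Ioc 0 δ) g) {a s : ℝ} (ha : a ≠ 0) (hs : s * |a| ≤ δ) :
    StrictConcaveOn ℝ (Ico (1 - s) 1) fun t => g (a + t * -a) := by
  have habs : ∀ t, g (|a| + t * -|a|) = g (a + t * -a) := fun t => by
    rcases abs_choice a with h | h
    · rw [h]
    · rw [h, ← hg.2.1 (a + t * -a)]
      ring_nf
  refine StrictConcaveOn.congr ?_ fun t _ => habs t
  refine hδ.comp_add_mul (convex_Ico _ _) (neg_ne_zero.2 (abs_ne_zero.2 ha)) fun t ht => ?_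
  have hpos := abs_pos.2 ha
  constructor <;> nlinarith [ht.1, ht.2]

theorem PenaltyConds.exists_sum_lt_of_abs_le (hg : PenaltyConds g) {u d : ι → ℝ} {j : ι}
    (hd : ∀ i, |d i| ≤ |u i|) (hdj : d j = -u j) (huj : u j ≠ 0) :
    ∃ t, ∑ i, g (u i + t * d i) < ∑ i, g (u i) := by
  by_contra! hge
  obtain ⟨δ, hδ, hstrict⟩ := hg.exists_strictConcaveOn
  set s := min 1 (δ / |u j|)
  have hu := abs_pos.2 huj
  have hs : 0 < s := lt_min one_pos (div_pos hδ hu)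
  have hsδ : s * |u j| ≤ δ := (le_div_iff₀ hu).1 (min_le_right _ _)
  have hIco : Ico (1 - s) 1 ⊆ Icc (-1) 1 := fun t ht =>
    ⟨by linarith [ht.1, min_le_left 1 (δ / |u j|)], ht.2.le⟩
  have hconc (S : Finset ι) : ConcaveOn ℝ (Icc (-1) 1) fun t => ∑ i ∈ S, g (u i + t * d i) :=
    .sum (convex_Icc _ _) S fun i _ => hg.concaveOn_line (hd i)
  have hconst :
      EqOn (fun t => ∑ i, g (u i + t * d i)) (fun _ => ∑ i, g (u i)) (Icc (-1) 1) := by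
    simpa using (hconc Finset.univ).eqOn_of_isMinOn_zero
      (isMinOn_iff.2 fun t _ => by simpa using hge t)
  have hstrictΦ : StrictConcaveOn ℝ (Ico (1 - s) 1) fun t => ∑ i, g (u i + t * d i) := by
    simp_rw [← Finset.add_sum_erase _ _ (Finset.mem_univ j), hdj]
    exact (hg.strictConcaveOn_line hstrict huj hsδ).add_concaveOn
      ((hconc _).subset hIco (convex_Ico _ _))
  have hx : 1 - s ∈ Ico (1 - s) 1 := ⟨le_rfl, by linarith⟩
  have hy : 1 - s / 2 ∈ Ico (1 - s) 1 := ⟨by linarith, by linarith⟩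
  have hmid := hstrictΦ.2 hx hy (by linarith) (by norm_num : (0 : ℝ) < 1 / 2)
    (by norm_num : (0 : ℝ) < 1 / 2) (by norm_num)
  rw [hconst (hIco hx), hconst (hIco hy), hconst (hIco (convex_Ico _ _ hx hy
    (by norm_num : (0 : ℝ) ≤ 1 / 2) (by norm_num : (0 : ℝ) ≤ 1 / 2) (by norm_num)))] at hmid
  simp only [smul_eq_mul] at hmid
  linarith

theorem PenaltyConds.l0_le_of_isMinOn (hg : PenaltyConds g) {m n : ℕ}
    (A : Matrix (Fin m) (Fin n) ℝ) {b : Fin m → ℝ} {u : Fin n → ℝ} (hu : A *ᵥ u = b)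
    (hmin : IsMinOn (fun w => ∑ i, g (w i)) {w | A *ᵥ w = b} u) : l0 u ≤ m := by
  by_contra! h
  obtain ⟨d, j, hAd, hd, hdj, huj⟩ := exists_mulVec_eq_zero_abs_le A h
  obtain ⟨t, ht⟩ := hg.exists_sum_lt_of_abs_le hd hdj huj
  have hfeas : A *ᵥ (u + t • d) = b := by
    rw [Matrix.mulVec_add, Matrix.mulVec_smul, hAd, smul_zero, add_zero, hu]
  exact (isMinOn_iff.1 hmin _ hfeas).not_gt (by simpa using ht)

theorem PenaltyConds.sum_lt_sum_of_lt_sum_compl (hg : PenaltyConds g)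
    {x w : ι → ℝ} {T : Finset ι} (hx : ∀ i ∉ T, x i = 0)
    (h : ∑ i ∈ T, g ((x - w) i) < ∑ i ∈ Tᶜ, g ((x - w) i)) :
    ∑ i, g (x i) < ∑ i, g (w i) :=
  calc ∑ i, g (x i) = ∑ i ∈ T, g (x i) :=
        (Finset.sum_subset (Finset.subset_univ T) fun i _ hi => by rw [hx i hi, hg.1]).symm
    _ ≤ ∑ i ∈ T, (g (w i) + g ((x - w) i)) := Finset.sum_le_sum fun i _ => by
        simpa using hg.map_add_le (w i) ((x - w) i)
    _ = ∑ i ∈ T, g (w i) + ∑ i ∈ T, g ((x - w) i) := Finset.sum_add_distrib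
    _ < ∑ i ∈ T, g (w i) + ∑ i ∈ Tᶜ, g ((x - w) i) := by gcongr
    _ = ∑ i ∈ T, g (w i) + ∑ i ∈ Tᶜ, g (w i) := by
        congr 1
        refine Finset.sum_congr rfl fun i hi => ?_
        rw [Pi.sub_apply, hx i (Finset.mem_compl.1 hi), zero_sub, hg.2.1]
    _ = ∑ i, g (w i) := Finset.sum_add_sum_compl T _

end PenaltyConds

theorem stmt4_general {m n : ℕ} (A : Matrix (Fin m) (Fin n) ℝ)
    (g : ℝ → ℝ) (hg : PenaltyConds g) (b : Fin m → ℝ)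
    (x : Fin n → ℝ) (hxf : A.mulVec x = b)
    (T : Finset (Fin n)) (hT : T = Finset.univ.filter fun i => x i ≠ 0)
    (hRNSP : ∀ w : Fin n → ℝ, A.mulVec w = b → l0 w ≤ m →
      x - w = 0 ∨ (∑ i ∈ T, g ((x - w) i)) < ∑ i ∈ Tᶜ, g ((x - w) i))
    (xstar : Fin n → ℝ) (hfs : A.mulVec xstar = b)
    (hmin : ∀ w : Fin n → ℝ, A.mulVec w = b → (∑ i, g (xstar i)) ≤ ∑ i, g (w i)) :
    xstar = x := by
  have hsparse : l0 xstar ≤ m := hg.l0_le_of_isMinOn A hfs (isMinOn_iff.2 hmin)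
  rcases hRNSP xstar hfs hsparse with h | h
  · exact (sub_eq_zero.1 h).symm
  · have hxT : ∀ i ∉ T, x i = 0 := fun i hi => by simpa [hT] using hi
    exact absurd (hmin x hxf) (hg.sum_lt_sum_of_lt_sum_compl hxT h).not_ge

/-- the `G` Restricted Nullspace Property implies exact recovery. -/
theorem stmt4 {m n : ℕ} (hmn : m < n) (A : Matrix (Fin m) (Fin n) ℝ) (hA : URP A)
    (g : ℝ → ℝ) (hg : PenaltyConds g) (b : Fin m → ℝ)
    (x : Fin n → ℝ) (hxf : A.mulVec x = b)
    (hxmin : ∀ w : Fin n → ℝ, A.mulVec w = b → l0 x ≤ l0 w)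
    (hk : 2 * l0 x ≤ m)
    (T : Finset (Fin n)) (hT : T = Finset.univ.filter fun i => x i ≠ 0)
    (hRNSP : ∀ w : Fin n → ℝ, A.mulVec w = b → l0 w ≤ m →
      x - w = 0 ∨ (∑ i ∈ T, g ((x - w) i)) < ∑ i ∈ Tᶜ, g ((x - w) i))
    (xstar : Fin n → ℝ) (hfs : A.mulVec xstar = b)
    (hmin : ∀ w : Fin n → ℝ, A.mulVec w = b → (∑ i, g (xstar i)) ≤ ∑ i, g (w i)) :
    xstar = x :=
  stmt4_general A g hg b x hxf T hT hRNSP xstar hfs hmin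

end
end

section
/- Let A ∈ ℝ^{m×n} with m < n satisfy the URP, let b ∈ ℝᵐ, and let x be a solution of Aw = b of minimal ‖·‖₀ with k := ‖x‖₀. Let 0 < α ≤ β be such that every nonzero entry of every vector w with Aw = b and ‖w‖₀ ≤ m has magnitude in [α, β]. If 2k ≤ m and μ < min{ α·((m+1−k)/k)·(1 + √(1 − k/(m+1−k))), 2β }, then every global minimizer of G_firm over {w : Aw = b} equals x. -/
open MeasureTheory Filter
open scoped BigOperators

noncomputable section

/-!
Along a line `y + t • h` with `A h = 0` and `h` supported inside the support of `y`, no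
coordinate changes sign for `|t| ≤ ε := min |yᵢ / hᵢ|`, so `t ↦ G_firm (y + t • h)` is concave on
`[-ε, ε]` and strictly concave near the endpoint where a coordinate of `y + t • h` vanishes;
hence `t = 0` is not a minimum. So a minimizer `x*` uses at most `m` columns and its nonzero
entries have modulus at least `α`. If `x* ≠ x`, the URP forces `x* - x` to have more than `m`
nonzero entries, so `x*` has at least `m + 1 - k` nonzero entries off the support of `x`, and
`(m + 1 - k) g_firm(α) ≤ G_firm(x*) ≤ G_firm(x) ≤ k μ / 2`, which the bound on `μ` rules out.
-/

open Set Matrix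

theorem ConcaveOn.comp_add_mul_s6 {s : Set ℝ} {f : ℝ → ℝ} (hf : ConcaveOn ℝ s f) (a c : ℝ) :
    ConcaveOn ℝ ((fun t => a + t * c) ⁻¹' s) (fun t => f (a + t * c)) := by
  have hline : ⇑(AffineMap.lineMap (k := ℝ) a (a + c)) = fun t => a + t * c := by
    ext t; rw [AffineMap.lineMap_apply_ring']; ring
  have h := hf.comp_affineMap (AffineMap.lineMap a (a + c))
  rw [hline] at h
  exact h

theorem StrictConcaveOn.comp_add_mul_s6 {s : Set ℝ} {f : ℝ → ℝ} (hf : StrictConcaveOn ℝ s f)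
    (a : ℝ) {c : ℝ} (hc : c ≠ 0) :
    StrictConcaveOn ℝ ((fun t => a + t * c) ⁻¹' s) (fun t => f (a + t * c)) := by
  refine ⟨(hf.concaveOn.comp_add_mul_s6 a c).1, fun x hx y hy hxy p q hp hq hpq => ?_⟩
  have hne : a + x * c ≠ a + y * c := by simpa [hc] using hxy
  convert hf.2 hx hy hne hp hq hpq using 2
  simp only [smul_eq_mul]
  linear_combination a * hpq.symm

theorem ConcaveOn.exists_lt_apply_zero {f : ℝ → ℝ} {ε δ : ℝ} (hδ : 0 < δ) (hδε : δ ≤ ε)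
    (hf : ConcaveOn ℝ (Icc (-ε) ε) f) (hf' : StrictConcaveOn ℝ (Icc (ε - δ) ε) f) :
    ∃ t, f t < f 0 := by
  by_contra! hmin
  have hε : 0 < ε := hδ.trans_le hδε
  -- a concave function with an interior minimum at `0` is constant on `[0, ε]`
  have hconst : ∀ t ∈ Icc 0 ε, f t = f 0 := by
    rintro t ⟨ht0, htε⟩
    refine le_antisymm ?_ (hmin t)
    rcases ht0.eq_or_lt with rfl | ht0
    · rfl
    have h0 : (0 : ℝ) ∈ openSegment ℝ t (-ε) := by
      rw [openSegment_symm, openSegment_eq_Ioo (by linarith)]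
      exact ⟨by linarith, ht0⟩
    exact hf.left_le_of_le_right ⟨by linarith, htε⟩ ⟨le_rfl, by linarith⟩ h0 (hmin _)
  have hmid : 1 / 2 * f (ε - δ) + 1 / 2 * f ε < f (1 / 2 * (ε - δ) + 1 / 2 * ε) :=
    hf'.2 ⟨le_rfl, by linarith⟩ ⟨by linarith, le_rfl⟩ (by linarith) (by norm_num) (by norm_num)
      (by norm_num)
  rw [hconst (ε - δ) ⟨by linarith, by linarith⟩, hconst ε ⟨hε.le, le_rfl⟩,
    hconst (1 / 2 * (ε - δ) + 1 / 2 * ε) ⟨by linarith, by linarith⟩] at hmid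
  linarith

section FirmPenalty

variable {μ : ℝ}

theorem strictConcaveOn_sub_sq_div (hμ : 0 < μ) :
    StrictConcaveOn ℝ univ (fun s : ℝ => s - s ^ 2 / (2 * μ)) := by
  refine ⟨convex_univ, fun x _ y _ hxy a b ha hb hab => ?_⟩
  obtain rfl : b = 1 - a := by linarith
  have hgap : (a * x + (1 - a) * y) - (a * x + (1 - a) * y) ^ 2 / (2 * μ)
      - (a * (x - x ^ 2 / (2 * μ)) + (1 - a) * (y - y ^ 2 / (2 * μ)))
      = a * (1 - a) * (x - y) ^ 2 / (2 * μ) := by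
    field_simp
    ring
  have hpos : 0 < a * (1 - a) * (x - y) ^ 2 / (2 * μ) := by
    have := sub_ne_zero.2 hxy
    positivity
  simp only [smul_eq_mul]
  linarith

theorem monotoneOn_sub_sq_div (hμ : 0 < μ) :
    MonotoneOn (fun s : ℝ => s - s ^ 2 / (2 * μ)) (Iic μ) := by
  intro x hx y hy hxy
  have hdiff : y - y ^ 2 / (2 * μ) - (x - x ^ 2 / (2 * μ))
      = (y - x) * (2 * μ - x - y) / (2 * μ) := by
    field_simp
    ring
  have : 0 ≤ (y - x) * (2 * μ - x - y) / (2 * μ) := by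
    apply div_nonneg _ (by positivity)
    exact mul_nonneg (by linarith) (by linarith [mem_Iic.1 hx, mem_Iic.1 hy])
  simp only
  linarith

theorem gfirm_neg (w : ℝ) : gfirm μ (-w) = gfirm μ w := by
  simp [gfirm]

theorem gfirm_abs (w : ℝ) : gfirm μ |w| = gfirm μ w := by
  simp [gfirm]

theorem gfirm_of_nonneg (hμ : 0 < μ) {s : ℝ} (hs : 0 ≤ s) :
    gfirm μ s = min s μ - min s μ ^ 2 / (2 * μ) := by
  rw [gfirm, abs_of_nonneg hs]
  split_ifs with h
  · rw [min_eq_left h]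
  · rw [min_eq_right (not_le.1 h).le]
    field_simp
    ring

theorem gfirm_zero (hμ : 0 < μ) : gfirm μ 0 = 0 := by
  simp [gfirm, hμ.le]

theorem gfirm_monotoneOn (hμ : 0 < μ) : MonotoneOn (gfirm μ) (Ici 0) := by
  intro a ha c hc hac
  rw [gfirm_of_nonneg hμ ha, gfirm_of_nonneg hμ hc]
  exact monotoneOn_sub_sq_div hμ (mem_Iic.2 (min_le_right _ _)) (mem_Iic.2 (min_le_right _ _))
    (min_le_min_right μ hac)

theorem gfirm_nonneg (hμ : 0 < μ) (w : ℝ) : 0 ≤ gfirm μ w := by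
  rw [← gfirm_abs, ← gfirm_zero hμ]
  exact gfirm_monotoneOn hμ (mem_Ici.2 le_rfl) (abs_nonneg w) (abs_nonneg w)

theorem gfirm_le_half (hμ : 0 < μ) (w : ℝ) : gfirm μ w ≤ μ / 2 := by
  rw [← gfirm_abs, gfirm_of_nonneg hμ (abs_nonneg w)]
  calc min |w| μ - min |w| μ ^ 2 / (2 * μ) ≤ μ - μ ^ 2 / (2 * μ) :=
        monotoneOn_sub_sq_div hμ (mem_Iic.2 (min_le_right _ _)) (mem_Iic.2 le_rfl)
          (min_le_right _ _)
    _ = μ / 2 := by field_simp; ring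

theorem gfirm_concaveOn_Ici (hμ : 0 < μ) : ConcaveOn ℝ (Ici 0) (gfirm μ) := by
  have hmin : ConcaveOn ℝ (Ici 0) (fun s => min s μ) :=
    (concaveOn_id (convex_Ici 0)).inf (concaveOn_const μ (convex_Ici 0))
  have himage : (fun s => min s μ) '' Ici 0 = Icc 0 μ := by
    ext y
    constructor
    · rintro ⟨s, hs, rfl⟩
      exact ⟨le_min hs hμ.le, min_le_right _ _⟩
    · rintro ⟨hy0, hyμ⟩
      exact ⟨y, hy0, min_eq_left hyμ⟩
  have hq := (strictConcaveOn_sub_sq_div hμ).concaveOn.subset (subset_univ _) (convex_Icc 0 μ)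
  rw [← himage] at hq
  refine (hq.comp hmin ?_).congr fun s hs => (gfirm_of_nonneg hμ hs).symm
  rw [himage]
  exact (monotoneOn_sub_sq_div hμ).mono fun s hs => hs.2

theorem gfirm_concaveOn_Iic (hμ : 0 < μ) : ConcaveOn ℝ (Iic 0) (gfirm μ) := by
  have h := (gfirm_concaveOn_Ici hμ).comp_add_mul_s6 0 (-1)
  have hpre : (fun t : ℝ => 0 + t * -1) ⁻¹' Ici 0 = Iic 0 := by
    ext t; simp
  rw [hpre] at h
  exact h.congr fun t _ => by simp [gfirm_neg]

theorem gfirm_strictConcaveOn_Icc (hμ : 0 < μ) : StrictConcaveOn ℝ (Icc 0 μ) (gfirm μ) :=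
  ((strictConcaveOn_sub_sq_div hμ).subset (subset_univ _) (convex_Icc 0 μ)).congr
    fun s hs => by rw [gfirm_of_nonneg hμ hs.1, min_eq_left hs.2]

end FirmPenalty

theorem concaveOn_sum {ι : Type*} {s : Finset ι} {I : Set ℝ} {f : ι → ℝ → ℝ} (hI : Convex ℝ I)
    (hf : ∀ i ∈ s, ConcaveOn ℝ I (f i)) : ConcaveOn ℝ I (fun t => ∑ i ∈ s, f i t) := by
  classical
  induction s using Finset.induction_on with
  | empty => simpa using concaveOn_const 0 hI
  | insert a s ha ih =>
    simp only [Finset.sum_insert ha]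
    exact (hf a (Finset.mem_insert_self a s)).add
      (ih fun i hi => hf i (Finset.mem_insert_of_mem hi))

section Line

variable {μ : ℝ} {n : ℕ}

theorem exists_Gfirm_add_smul_lt_of_root (hμ : 0 < μ) {y h : Fin n → ℝ} {ε : ℝ} (hε : 0 < ε)
    (hcell : ∀ i, ε * |h i| ≤ |y i|) {j : Fin n} (hj : h j ≠ 0) (hroot : y j + ε * h j = 0) :
    ∃ t : ℝ, Gfirm μ (y + t • h) < Gfirm μ y := by
  set ψ : Fin n → ℝ → ℝ := fun i t => gfirm μ (y i + t * h i)
  set φ : ℝ → ℝ := fun t => ψ j t + ∑ i ∈ Finset.univ.erase j, ψ i t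
  have hGφ : ∀ t, Gfirm μ (y + t • h) = φ t := fun t =>
    (Finset.add_sum_erase _ (fun i => gfirm μ (y i + t * h i)) (Finset.mem_univ j)).symm
  -- along `[-ε, ε]` no coordinate of `y + t • h` changes sign
  have hconc : ∀ i, ConcaveOn ℝ (Icc (-ε) ε) (ψ i) := by
    intro i
    have hti : ∀ t ∈ Icc (-ε) ε, |t * h i| ≤ |y i| := fun t ht => by
      rw [abs_mul]
      exact (mul_le_mul_of_nonneg_right (abs_le.2 ht) (abs_nonneg _)).trans (hcell i)
    rcases le_total 0 (y i) with hy | hy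
    · refine ((gfirm_concaveOn_Ici hμ).comp_add_mul_s6 (y i) (h i)).subset
        (fun t ht => ?_) (convex_Icc _ _)
      have := neg_abs_le (t * h i)
      simp only [mem_preimage, mem_Ici]
      linarith [hti t ht, abs_of_nonneg hy]
    · refine ((gfirm_concaveOn_Iic hμ).comp_add_mul_s6 (y i) (h i)).subset
        (fun t ht => ?_) (convex_Icc _ _)
      have := le_abs_self (t * h i)
      simp only [mem_preimage, mem_Iic]
      linarith [hti t ht, abs_of_nonpos hy]
  set δ := min ε (μ / |h j|)
  have hhj : 0 < |h j| := abs_pos.2 hj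
  have hδpos : 0 < δ := lt_min hε (div_pos hμ hhj)
  -- near `t = ε` the `j`-th coordinate stays in `[-μ, μ]`, where `gfirm` is strictly concave
  have hstrict : StrictConcaveOn ℝ (Icc (ε - δ) ε) (ψ j) := by
    have hψj : ∀ t, gfirm μ (ε * |h j| + t * -|h j|) = ψ j t := fun t => by
      have h1 : y j + t * h j = (t - ε) * h j := by linear_combination hroot
      have h2 : ε * |h j| + t * -|h j| = (ε - t) * |h j| := by ring
      show _ = gfirm μ (y j + t * h j)
      rw [h1, h2, ← gfirm_abs, ← gfirm_abs ((t - ε) * h j)]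
      simp [abs_mul, abs_sub_comm]
    have hδμ : δ * |h j| ≤ μ := (le_div_iff₀ hhj).1 (min_le_right _ _)
    refine (((gfirm_strictConcaveOn_Icc hμ).comp_add_mul_s6 (ε * |h j|) (neg_ne_zero.2 hhj.ne')).subset
      (fun t ht => ?_) (convex_Icc _ _)).congr fun t _ => hψj t
    simp only [mem_preimage, mem_Icc]
    constructor <;> nlinarith [ht.1, ht.2]
  have hI : ConcaveOn ℝ (Icc (-ε) ε) φ :=
    (hconc j).add (concaveOn_sum (convex_Icc _ _) fun i _ => hconc i)
  have hJ : StrictConcaveOn ℝ (Icc (ε - δ) ε) φ :=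
    hstrict.add_concaveOn ((concaveOn_sum (convex_Icc _ _) fun i _ => hconc i).subset
      (Icc_subset_Icc (by linarith [min_le_left ε (μ / |h j|)]) le_rfl) (convex_Icc _ _))
  obtain ⟨t, ht⟩ := hI.exists_lt_apply_zero hδpos (min_le_left _ _) hJ
  have hφ0 : φ 0 = Gfirm μ y := by rw [← hGφ, zero_smul, add_zero]
  exact ⟨t, hGφ t ▸ hφ0 ▸ ht⟩

theorem exists_Gfirm_add_smul_lt (hμ : 0 < μ) {y h : Fin n → ℝ} (hh : h ≠ 0)
    (hsupp : ∀ i, h i ≠ 0 → y i ≠ 0) : ∃ t : ℝ, Gfirm μ (y + t • h) < Gfirm μ y := by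
  obtain ⟨i₀, hi₀⟩ := Function.ne_iff.1 hh
  -- `ε` is the smallest `|t|` at which a coordinate of `y + t • h` vanishes
  obtain ⟨j, hj, hjmin⟩ := Finset.exists_min_image {i | h i ≠ 0} (fun i => |y i| / |h i|)
    ⟨i₀, by simpa using hi₀⟩
  replace hj : h j ≠ 0 := by simpa using hj
  set ε := |y j| / |h j|
  have hε : 0 < ε := div_pos (abs_pos.2 (hsupp j hj)) (abs_pos.2 hj)
  have hcell : ∀ i, ε * |h i| ≤ |y i| := by
    intro i
    by_cases hi : h i = 0
    · simp [hi]
    · exact (le_div_iff₀ (abs_pos.2 hi)).1 (hjmin i (by simpa using hi))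
  have hroot : (y j + ε * h j) * (y j + ε * -h j) = 0 := by
    have : ε * |h j| = |y j| := div_mul_cancel₀ _ (abs_ne_zero.2 hj)
    linear_combination -sq_abs (y j) + ε ^ 2 * sq_abs (h j) - (ε * |h j| + |y j|) * this
  rcases mul_eq_zero.1 hroot with hroot | hroot
  · exact exists_Gfirm_add_smul_lt_of_root hμ hε hcell hj hroot
  · obtain ⟨t, ht⟩ := exists_Gfirm_add_smul_lt_of_root (h := -h) hμ hε (by simpa using hcell)
      (neg_ne_zero.2 hj) hroot
    exact ⟨-t, by simpa [neg_smul, smul_neg] using ht⟩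

end Line

section Kernel

variable {m n : ℕ}

theorem mulVec_eq_sum_col (A : Matrix (Fin m) (Fin n) ℝ) {T : Finset (Fin n)} {h : Fin n → ℝ}
    (hT : ∀ i, h i ≠ 0 → i ∈ T) : A *ᵥ h = ∑ j : T, h j • fun i => A i j := by
  ext r
  simp only [Matrix.mulVec, dotProduct, Finset.sum_apply, Pi.smul_apply, smul_eq_mul]
  rw [Finset.sum_coe_sort T fun j => h j * A r j, ← Finset.sum_subset (Finset.subset_univ T)]
  · exact Finset.sum_congr rfl fun j _ => mul_comm _ _
  · intro i _ hi
    rw [not_imp_comm.1 (hT i) hi, mul_zero]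

theorem exists_mulVec_eq_zero_of_card_lt (A : Matrix (Fin m) (Fin n) ℝ) {T : Finset (Fin n)}
    (hT : m < T.card) : ∃ h ≠ 0, A *ᵥ h = 0 ∧ ∀ i, h i ≠ 0 → i ∈ T := by
  classical
  have hdep : ¬ LinearIndependent ℝ (fun j : T => fun i => A i j) := fun hli => by
    have := hli.fintype_card_le_finrank
    simp only [Fintype.card_coe, Module.finrank_fin_fun] at this
    omega
  obtain ⟨g, hg, j₀, hj₀⟩ := Fintype.not_linearIndependent_iff.1 hdep
  let h : Fin n → ℝ := fun i => if hi : i ∈ T then g ⟨i, hi⟩ else 0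
  have hsupp : ∀ i, h i ≠ 0 → i ∈ T := fun i hi => by
    by_contra hiT
    simp [h, hiT] at hi
  refine ⟨h, fun h0 => hj₀ ?_, ?_, hsupp⟩
  · simpa [h] using congrFun h0 j₀
  · rw [mulVec_eq_sum_col A hsupp]
    simpa [h] using hg

theorem URP.lt_l0_of_mulVec_eq_zero (hmn : m ≤ n) {A : Matrix (Fin m) (Fin n) ℝ} (hA : URP A)
    {h : Fin n → ℝ} (hker : A *ᵥ h = 0) (hne : h ≠ 0) : m < l0 h := by
  by_contra! hle
  obtain ⟨S, hsub, hS⟩ := Finset.exists_superset_card_eq hle (by simpa using hmn)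
  have hsupp : ∀ i, h i ≠ 0 → i ∈ S := fun i hi => hsub (by simpa using hi)
  have hzero := Fintype.linearIndependent_iff.1 (hA S hS) (fun j => h j)
    (by rw [← mulVec_eq_sum_col A hsupp, hker])
  exact hne (funext fun i => by_contra fun hi => hi (hzero ⟨i, hsupp i hi⟩))

theorem l0_le_of_forall_Gfirm_le {μ : ℝ} (hμ : 0 < μ) {A : Matrix (Fin m) (Fin n) ℝ}
    {b : Fin m → ℝ} {y : Fin n → ℝ} (hy : A *ᵥ y = b)
    (hmin : ∀ w, A *ᵥ w = b → Gfirm μ y ≤ Gfirm μ w) : l0 y ≤ m := by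
  by_contra! hlt
  obtain ⟨h, hne, hker, hsupp⟩ := exists_mulVec_eq_zero_of_card_lt A hlt
  obtain ⟨t, ht⟩ := exists_Gfirm_add_smul_lt hμ hne fun i hi => by simpa using hsupp i hi
  refine (hmin (y + t • h) ?_).not_gt ht
  rw [Matrix.mulVec_add, Matrix.mulVec_smul, hker, smul_zero, add_zero, hy]

end Kernel

section Counting

variable {μ : ℝ} {n : ℕ}

theorem Gfirm_le_l0_mul (hμ : 0 < μ) (x : Fin n → ℝ) : Gfirm μ x ≤ l0 x * (μ / 2) := by
  calc Gfirm μ x = ∑ i ∈ Finset.univ.filter fun i => x i ≠ 0, gfirm μ (x i) := by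
        refine (Finset.sum_filter_of_ne (p := fun i => x i ≠ 0) fun i _ hi hx => hi ?_).symm
        rw [hx, gfirm_zero hμ]
    _ ≤ l0 x * (μ / 2) := by
        simpa [l0] using Finset.sum_le_card_nsmul _ _ _ fun i _ => gfirm_le_half hμ (x i)

theorem card_mul_gfirm_le_Gfirm (hμ : 0 < μ) {α : ℝ} (hα : 0 ≤ α) {D : Finset (Fin n)}
    {w : Fin n → ℝ} (hD : ∀ i ∈ D, α ≤ |w i|) : D.card * gfirm μ α ≤ Gfirm μ w := by
  calc D.card * gfirm μ α = ∑ i ∈ D, gfirm μ α := by simp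
    _ ≤ ∑ i ∈ D, gfirm μ (w i) := Finset.sum_le_sum fun i hi =>
        gfirm_abs (w i) ▸ gfirm_monotoneOn hμ hα (mem_Ici.2 (abs_nonneg _)) (hD i hi)
    _ ≤ Gfirm μ w := Finset.sum_le_sum_of_subset_of_nonneg (Finset.subset_univ D)
        fun i _ _ => gfirm_nonneg hμ _

theorem l0_sub_le (u v : Fin n → ℝ) :
    l0 (u - v) ≤
      ((Finset.univ.filter fun i => u i ≠ 0) \ Finset.univ.filter fun i => v i ≠ 0).card
        + l0 v := by
  refine (Finset.card_le_card fun i hi => ?_).trans (Finset.card_union_le _ _)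
  by_cases hv : v i = 0
  · simp_all
  · simp [hv]

end Counting

theorem mul_half_lt_mul_gfirm {μ α K M : ℝ} (hμ : 0 < μ) (hα : 0 < α) (hK : 0 < K)
    (hKM : K < M) (hμα : μ < α * (M / K) * (1 + √(1 - K / M))) :
    K * (μ / 2) < M * gfirm μ α := by
  have hM : 0 < M := hK.trans hKM
  rcases le_or_gt μ α with hμα' | hαμ
  · have hg : gfirm μ α = μ / 2 := by
      rw [gfirm_of_nonneg hμ hα.le, min_eq_right hμα']
      field_simp
      ring
    rw [hg]
    exact mul_lt_mul_of_pos_right hKM (by positivity)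
  · rw [gfirm_of_nonneg hμ hα.le, min_eq_left hαμ.le]
    set s := √(1 - K / M)
    have hKM' : K / M < 1 := (div_lt_one hM).2 hKM
    have hMs : M * s ^ 2 = M - K := by
      rw [Real.sq_sqrt (by linarith), mul_sub, mul_div_cancel₀ _ hM.ne']
      ring
    have hs0 : 0 < s := Real.sqrt_pos.2 (by linarith)
    have hs1 : s < 1 := (Real.sqrt_lt' one_pos).2 (by linarith [div_pos hK hM])
    -- `μ` lies strictly between the two roots `α (M / K) (1 ± s)` of `K μ² - 2 M α μ + M α²`
    have hupper : K * μ < M * α * (1 + s) := by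
      have := mul_lt_mul_of_pos_left hμα hK
      rwa [show K * (α * (M / K) * (1 + s)) = M * α * (1 + s) by field_simp] at this
    have hlower : M * α * (1 - s) < K * μ := by
      have : M * (1 - s) < K := by nlinarith
      nlinarith
    have hsq : (K * μ - M * α) ^ 2 < (M * α * s) ^ 2 :=
      sq_lt_sq' (by linarith) (by linarith)
    have hquad : K * μ ^ 2 < M * (2 * μ * α - α ^ 2) := by
      have : (M * α * s) ^ 2 = M * α ^ 2 * (M - K) := by rw [← hMs]; ring
      nlinarith
    rw [show M * (α - α ^ 2 / (2 * μ)) = M * (2 * μ * α - α ^ 2) / (2 * μ) by field_simp,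
      lt_div_iff₀ (by positivity)]
    linarith

theorem stmt6_general {m n : ℕ} (hmn : m < n) (A : Matrix (Fin m) (Fin n) ℝ) (hA : URP A)
    (b : Fin m → ℝ) (μ : ℝ) (hμ : 0 < μ)
    (x : Fin n → ℝ) (hxf : A.mulVec x = b)
    (α β : ℝ) (hα : 0 < α)
    (hbound : ∀ w : Fin n → ℝ, A.mulVec w = b → l0 w ≤ m →
      ∀ i, w i ≠ 0 → α ≤ |w i| ∧ |w i| ≤ β)
    (hk : 2 * l0 x ≤ m)
    (hμbd : μ < min
      (α * (((m : ℝ) + 1 - (l0 x : ℝ)) / (l0 x : ℝ)) *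
        (1 + Real.sqrt (1 - (l0 x : ℝ) / ((m : ℝ) + 1 - (l0 x : ℝ)))))
      (2 * β))
    (xstar : Fin n → ℝ) (hfs : A.mulVec xstar = b)
    (hmin : ∀ w : Fin n → ℝ, A.mulVec w = b → Gfirm μ xstar ≤ Gfirm μ w) :
    xstar = x := by
  have hμbd' := (lt_min_iff.1 hμbd).1
  have hk0 : 0 < l0 x := Nat.pos_of_ne_zero fun h0 => by
    simp only [h0, CharP.cast_eq_zero, div_zero, mul_zero, zero_mul] at hμbd'
    linarith
  have hsparse : l0 xstar ≤ m := l0_le_of_forall_Gfirm_le hμ hfs hmin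
  by_contra hne
  set D := (Finset.univ.filter fun i => xstar i ≠ 0) \ Finset.univ.filter fun i => x i ≠ 0
  -- `xstar - x` is a nonzero kernel vector, so by the URP its support has more than `m` entries
  have hcount : m < D.card + l0 x :=
    (hA.lt_l0_of_mulVec_eq_zero hmn.le (by rw [mulVec_sub, hfs, hxf, sub_self])
      (sub_ne_zero.2 hne)).trans_le (l0_sub_le xstar x)
  have hD : ∀ i ∈ D, α ≤ |xstar i| := fun i hi =>
    (hbound xstar hfs hsparse i (by simpa using (Finset.mem_sdiff.1 hi).1)).1
  have hGfirm : D.card * gfirm μ α ≤ l0 x * (μ / 2) :=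
    (card_mul_gfirm_le_Gfirm hμ hα.le hD).trans ((hmin x hxf).trans (Gfirm_le_l0_mul hμ x))
  have hkm : (l0 x : ℝ) < m + 1 - l0 x := by
    have : (2 * l0 x : ℝ) ≤ m := by exact_mod_cast hk
    linarith
  have hgap := mul_half_lt_mul_gfirm hμ hα (by exact_mod_cast hk0) hkm hμbd'
  have hDcard : (m + 1 - l0 x : ℝ) ≤ D.card := by
    have : (m + 1 : ℝ) ≤ D.card + l0 x := by exact_mod_cast hcount
    linarith
  nlinarith [gfirm_nonneg hμ α]

/-- `G_firm` exact recovery. -/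
theorem stmt6 {m n : ℕ} (hmn : m < n) (A : Matrix (Fin m) (Fin n) ℝ) (hA : URP A)
    (b : Fin m → ℝ) (μ : ℝ) (hμ : 0 < μ)
    (x : Fin n → ℝ) (hxf : A.mulVec x = b)
    (hxmin : ∀ w : Fin n → ℝ, A.mulVec w = b → l0 x ≤ l0 w)
    (α β : ℝ) (hα : 0 < α) (hαβ : α ≤ β)
    (hbound : ∀ w : Fin n → ℝ, A.mulVec w = b → l0 w ≤ m →
      ∀ i, w i ≠ 0 → α ≤ |w i| ∧ |w i| ≤ β)
    (hk : 2 * l0 x ≤ m)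
    (hμbd : μ < min
      (α * (((m : ℝ) + 1 - (l0 x : ℝ)) / (l0 x : ℝ)) *
        (1 + Real.sqrt (1 - (l0 x : ℝ) / ((m : ℝ) + 1 - (l0 x : ℝ)))))
      (2 * β))
    (xstar : Fin n → ℝ) (hfs : A.mulVec xstar = b)
    (hmin : ∀ w : Fin n → ℝ, A.mulVec w = b → Gfirm μ xstar ≤ Gfirm μ w) :
    xstar = x :=
  stmt6_general hmn A hA b μ hμ x hxf α β hα hbound hk hμbd xstar hfs hmin

end
end
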